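/- arXiv:1605.04555 — 3 statements merged into one kernel-verified Lean document; each statement's English description precedes it below -/
import Mathlib

section
/- The generalized derivation algebra GDer(N) of a multiplicative n-Hom Lie superalgebra N is a Hom-subalgebra of (Ω, [·,·], α̃): it is a ℤ₂-graded subspace of Ω closed under α̃ and under the supercommutator. Concretely, if D is a homogeneous generalized α^k-derivation of degree ξ and E a homogeneous generalized α^s-derivation of degree η, then α̃(D) = αD is a generalized α^{k+1}-derivation of degree ξ and [D,E] = DE − (−1)^{ξη}ED is a generalized α^{k+s}-derivation of degree ξ+η. -/
open scoped BigOperators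

noncomputable section

variable {𝔽 : Type*} [Field 𝔽]
variable {N : Type*} [AddCommGroup N] [Module 𝔽 N]

/-- The sign `(-1)^g` for `g : ZMod 2`. -/
def sgn (𝔽 : Type*) [Field 𝔽] (g : ZMod 2) : 𝔽 := if g = 0 then 1 else -1

/-- `|X_{i-1}|` : the sum of the degrees `d j` for `j < i`. -/
def psum {m : ℕ} (d : Fin m → ZMod 2) (i : Fin m) : ZMod 2 :=
  ∑ j ∈ Finset.univ.filter (fun j => j < i), d j

/-- `D` is homogeneous of degree `ξ` with respect to the `ℤ₂`-grading `gr`. -/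
def Homog (gr : ZMod 2 → Submodule 𝔽 N) (ξ : ZMod 2) (D : N →ₗ[𝔽] N) : Prop :=
  ∀ g : ZMod 2, ∀ x ∈ gr g, D x ∈ gr (g + ξ)

/-- `(N, br, α)` is a multiplicative `n`-Hom Lie superalgebra, where `n = m + 1`:
`N = N₀ ⊕ N₁` is `ℤ₂`-graded, the `n`-multilinear bracket `br` is even (adds degrees),
super skew-symmetric in adjacent arguments, `α` is even, multiplicative, and the super
Hom-Jacobi identity holds. -/
structure IsMNHLS {m : ℕ} (gr : ZMod 2 → Submodule 𝔽 N)
    (br : MultilinearMap 𝔽 (fun _ : Fin (m + 1) => N) N) (α : N →ₗ[𝔽] N) : Prop where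
  internal : DirectSum.IsInternal gr
  alpha_even : ∀ g : ZMod 2, ∀ x ∈ gr g, α x ∈ gr g
  br_deg : ∀ (d : Fin (m + 1) → ZMod 2) (x : Fin (m + 1) → N),
      (∀ i, x i ∈ gr (d i)) → br x ∈ gr (∑ i, d i)
  skew : ∀ (d : Fin (m + 1) → ZMod 2) (x : Fin (m + 1) → N),
      (∀ i, x i ∈ gr (d i)) → ∀ i j : Fin (m + 1), (i : ℕ) + 1 = (j : ℕ) →
      br x = -sgn 𝔽 (d i * d j) • br (x ∘ Equiv.swap i j)
  alpha_br : ∀ x : Fin (m + 1) → N, α (br x) = br fun i => α (x i)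
  jacobi : ∀ (dx : Fin m → ZMod 2) (x : Fin m → N)
      (dy : Fin (m + 1) → ZMod 2) (y : Fin (m + 1) → N),
      (∀ i, x i ∈ gr (dx i)) → (∀ i, y i ∈ gr (dy i)) →
      br (Fin.snoc (fun i => α (x i)) (br y)) =
        ∑ i : Fin (m + 1), sgn 𝔽 ((∑ j, dx j) * psum dy i) •
          br (Function.update (fun j => α (y j)) i (br (Fin.snoc x (y i))))

/-- `D` is a homogeneous `α^k`-derivation of degree `ξ`. -/
def IsDer {m : ℕ} (gr : ZMod 2 → Submodule 𝔽 N)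
    (br : MultilinearMap 𝔽 (fun _ : Fin (m + 1) => N) N) (α : N →ₗ[𝔽] N)
    (k : ℕ) (ξ : ZMod 2) (D : N →ₗ[𝔽] N) : Prop :=
  Homog gr ξ D ∧ D ∘ₗ α = α ∘ₗ D ∧
    ∀ (d : Fin (m + 1) → ZMod 2) (x : Fin (m + 1) → N), (∀ i, x i ∈ gr (d i)) →
      D (br x) = ∑ i : Fin (m + 1), sgn 𝔽 (ξ * psum d i) •
        br (Function.update (fun j => (α ^ k) (x j)) i (D (x i)))

/-- `D` is a homogeneous `α^k`-quasiderivation of degree `ξ` with associated map `D'`. -/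
def IsQDerWith {m : ℕ} (gr : ZMod 2 → Submodule 𝔽 N)
    (br : MultilinearMap 𝔽 (fun _ : Fin (m + 1) => N) N) (α : N →ₗ[𝔽] N)
    (k : ℕ) (ξ : ZMod 2) (D D' : N →ₗ[𝔽] N) : Prop :=
  Homog gr ξ D ∧ D ∘ₗ α = α ∘ₗ D ∧ Homog gr ξ D' ∧ D' ∘ₗ α = α ∘ₗ D' ∧
    ∀ (d : Fin (m + 1) → ZMod 2) (x : Fin (m + 1) → N), (∀ i, x i ∈ gr (d i)) →
      (∑ i : Fin (m + 1), sgn 𝔽 (ξ * psum d i) •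
        br (Function.update (fun j => (α ^ k) (x j)) i (D (x i)))) = D' (br x)

/-- `D` is a homogeneous `α^k`-quasiderivation of degree `ξ`. -/
def IsQDer {m : ℕ} (gr : ZMod 2 → Submodule 𝔽 N)
    (br : MultilinearMap 𝔽 (fun _ : Fin (m + 1) => N) N) (α : N →ₗ[𝔽] N)
    (k : ℕ) (ξ : ZMod 2) (D : N →ₗ[𝔽] N) : Prop :=
  ∃ D' : N →ₗ[𝔽] N, IsQDerWith gr br α k ξ D D'

/-- `D` is a homogeneous generalized `α^k`-derivation of degree `ξ`:
there are `D⁽¹⁾, …, D⁽ⁿ⁾` (here `DD i` for positions `i = 1, …, n-1`, with `DD 0 = D`,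
and `Dn = D⁽ⁿ⁾`) all homogeneous of degree `ξ` and commuting with `α`, satisfying the
defining identity. -/
def IsGDer {m : ℕ} (gr : ZMod 2 → Submodule 𝔽 N)
    (br : MultilinearMap 𝔽 (fun _ : Fin (m + 1) => N) N) (α : N →ₗ[𝔽] N)
    (k : ℕ) (ξ : ZMod 2) (D : N →ₗ[𝔽] N) : Prop :=
  Homog gr ξ D ∧ D ∘ₗ α = α ∘ₗ D ∧
    ∃ (DD : Fin (m + 1) → (N →ₗ[𝔽] N)) (Dn : N →ₗ[𝔽] N),
      DD 0 = D ∧ (∀ i, Homog gr ξ (DD i)) ∧ (∀ i, DD i ∘ₗ α = α ∘ₗ DD i) ∧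
      Homog gr ξ Dn ∧ Dn ∘ₗ α = α ∘ₗ Dn ∧
      ∀ (d : Fin (m + 1) → ZMod 2) (x : Fin (m + 1) → N), (∀ i, x i ∈ gr (d i)) →
        (∑ i : Fin (m + 1), sgn 𝔽 (ξ * psum d i) •
          br (Function.update (fun j => (α ^ k) (x j)) i (DD i (x i)))) = Dn (br x)

/-- `D` is a homogeneous `α^k`-centroid element of degree `ξ`. -/
def IsCent {m : ℕ} (gr : ZMod 2 → Submodule 𝔽 N)
    (br : MultilinearMap 𝔽 (fun _ : Fin (m + 1) => N) N) (α : N →ₗ[𝔽] N)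
    (k : ℕ) (ξ : ZMod 2) (D : N →ₗ[𝔽] N) : Prop :=
  Homog gr ξ D ∧ D ∘ₗ α = α ∘ₗ D ∧
    ∀ (d : Fin (m + 1) → ZMod 2) (x : Fin (m + 1) → N), (∀ i, x i ∈ gr (d i)) →
      (∀ i : Fin (m + 1),
        br (Function.update (fun j => (α ^ k) (x j)) 0 (D (x 0))) =
          sgn 𝔽 (ξ * psum d i) •
            br (Function.update (fun j => (α ^ k) (x j)) i (D (x i)))) ∧
      br (Function.update (fun j => (α ^ k) (x j)) 0 (D (x 0))) = D (br x)

/-- `D` is a homogeneous `α^k`-quasicentroid element of degree `ξ`. -/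
def IsQCent {m : ℕ} (gr : ZMod 2 → Submodule 𝔽 N)
    (br : MultilinearMap 𝔽 (fun _ : Fin (m + 1) => N) N) (α : N →ₗ[𝔽] N)
    (k : ℕ) (ξ : ZMod 2) (D : N →ₗ[𝔽] N) : Prop :=
  Homog gr ξ D ∧ D ∘ₗ α = α ∘ₗ D ∧
    ∀ (d : Fin (m + 1) → ZMod 2) (x : Fin (m + 1) → N), (∀ i, x i ∈ gr (d i)) →
      ∀ i : Fin (m + 1),
        br (Function.update (fun j => (α ^ k) (x j)) 0 (D (x 0))) =
          sgn 𝔽 (ξ * psum d i) •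
            br (Function.update (fun j => (α ^ k) (x j)) i (D (x i)))

/-- `D` is a homogeneous `α^k`-center derivation of degree `ξ`. -/
def IsZDer {m : ℕ} (gr : ZMod 2 → Submodule 𝔽 N)
    (br : MultilinearMap 𝔽 (fun _ : Fin (m + 1) => N) N) (α : N →ₗ[𝔽] N)
    (k : ℕ) (ξ : ZMod 2) (D : N →ₗ[𝔽] N) : Prop :=
  Homog gr ξ D ∧ D ∘ₗ α = α ∘ₗ D ∧
    ∀ (d : Fin (m + 1) → ZMod 2) (x : Fin (m + 1) → N), (∀ i, x i ∈ gr (d i)) →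
      br (Function.update (fun j => (α ^ k) (x j)) 0 (D (x 0))) = 0 ∧ D (br x) = 0

/-- The center `Z(N) = {x : [x, y₂, …, yₙ] = 0}`. -/
def center {m : ℕ} (br : MultilinearMap 𝔽 (fun _ : Fin (m + 1) => N) N) :
    Submodule 𝔽 N where
  carrier := {x | ∀ y : Fin (m + 1) → N, br (Function.update y 0 x) = 0}
  add_mem' := by
    intro a b ha hb y
    rw [MultilinearMap.map_update_add, ha y, hb y, add_zero]
  zero_mem' := by
    intro y
    exact br.map_update_zero y 0
  smul_mem' := by
    intro c a ha y
    rw [MultilinearMap.map_update_smul, ha y, smul_zero]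

/-- The Jordan product `D • E = ½(DE + (-1)^{|D||E|} ED)` of operators of degrees `ξ, η`. -/
def jprod (𝔽 : Type*) [Field 𝔽] {N : Type*} [AddCommGroup N] [Module 𝔽 N]
    (ξ η : ZMod 2) (D E : N →ₗ[𝔽] N) : N →ₗ[𝔽] N :=
  (2 : 𝔽)⁻¹ • (D ∘ₗ E + sgn 𝔽 (ξ * η) • (E ∘ₗ D))

/-- The Hom-associator of the Jordan product with respect to `α̃(u) = α ∘ u`, where
`x, y, z` have degrees `a, b, c`. -/
def jassoc (𝔽 : Type*) [Field 𝔽] {N : Type*} [AddCommGroup N] [Module 𝔽 N]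
    (α : N →ₗ[𝔽] N) (a b c : ZMod 2) (x y z : N →ₗ[𝔽] N) : N →ₗ[𝔽] N :=
  jprod 𝔽 (a + b) c (jprod 𝔽 a b x y) (α ∘ₗ z) -
    jprod 𝔽 a (b + c) (α ∘ₗ x) (jprod 𝔽 b c y z)

/-- The bracket subalgebra `[N, …, N]`, the span of all brackets. -/
def brSub {m : ℕ} (br : MultilinearMap 𝔽 (fun _ : Fin (m + 1) => N) N) :
    Submodule 𝔽 N :=
  Submodule.span 𝔽 (Set.range fun x : Fin (m + 1) → N => br x)

/-- The bracket of `Ň = Nt + Ntⁿ` (modelled as `N × N`, first coordinate the coefficient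
of `t`, second the coefficient of `tⁿ`): `[x₁t, …, xₙt] = [x₁, …, xₙ]tⁿ` and every bracket
involving a `tⁿ`-term vanishes. -/
def checkBr {m : ℕ} (br : MultilinearMap 𝔽 (fun _ : Fin (m + 1) => N) N) :
    MultilinearMap 𝔽 (fun _ : Fin (m + 1) => N × N) (N × N) :=
  (LinearMap.inr 𝔽 N N).compMultilinearMap
    (br.compLinearMap fun _ => LinearMap.fst 𝔽 N N)

/-- The grading of `Ň = Nt + Ntⁿ`. -/
def checkGr (gr : ZMod 2 → Submodule 𝔽 N) (g : ZMod 2) : Submodule 𝔽 (N × N) :=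
  (gr g).prod (gr g)

/-- The map `φ(D) : Ň → Ň`, `φ(D)(at + utⁿ + btⁿ) = D(a)t + D'(b)tⁿ`, where `π` is the
projection of `N` onto `[N, …, N]` along `U`. -/
def phiMap (D D' π : N →ₗ[𝔽] N) : N × N →ₗ[𝔽] N × N :=
  LinearMap.prodMap D (D' ∘ₗ π)


section AuxGDer

variable {𝔽 : Type*} [Field 𝔽] {N : Type*} [AddCommGroup N] [Module 𝔽 N]

lemma sgn_mul' (a b : ZMod 2) : sgn 𝔽 a * sgn 𝔽 b = sgn 𝔽 (a + b) := by
  have h : ∀ g : ZMod 2, g = 0 ∨ g = 1 := by decide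
  rcases h a with rfl|rfl <;> rcases h b with rfl|rfl <;>
    simp [sgn, show (1:ZMod 2)+1 = 0 by decide, show (1:ZMod 2) ≠ 0 by decide]

lemma powApply (α : N →ₗ[𝔽] N) (k : ℕ) (y : N) : (α^(k+1)) y = α ((α^k) y) := by
  rw [pow_succ', Module.End.mul_apply]

lemma powAdd (α : N →ₗ[𝔽] N) (k s : ℕ) (y : N) : (α^(k+s)) y = (α^k) ((α^s) y) := by
  rw [pow_add, Module.End.mul_apply]

lemma commApply {D α : N →ₗ[𝔽] N} (h : D ∘ₗ α = α ∘ₗ D) (y : N) : D (α y) = α (D y) :=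
  LinearMap.congr_fun h y

lemma commPow {D α : N →ₗ[𝔽] N} (h : D ∘ₗ α = α ∘ₗ D) (t : ℕ) (y : N) :
    D ((α^t) y) = (α^t) (D y) := by
  induction t with
  | zero => simp
  | succ n ih => rw [powApply, commApply h, ih, powApply]

lemma gradePow {gr : ZMod 2 → Submodule 𝔽 N} {α : N →ₗ[𝔽] N}
    (hα : ∀ g : ZMod 2, ∀ x ∈ gr g, α x ∈ gr g) (t : ℕ) (g : ZMod 2) (x : N)
    (hx : x ∈ gr g) : (α^t) x ∈ gr g := by
  induction t with
  | zero => simpa using hx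
  | succ n ih => rw [powApply]; exact hα g _ ih

lemma psum_update {m : ℕ} (d : Fin (m+1) → ZMod 2) (i j : Fin (m+1)) (θ : ZMod 2) :
    psum (Function.update d i (d i + θ)) j = psum d j + (if i < j then θ else 0) := by
  unfold psum
  by_cases h : i < j
  · have hi : i ∈ Finset.univ.filter (fun l => l < j) := by simp [h]
    rw [Finset.sum_update_of_mem hi, if_pos h,
      ← Finset.sum_erase_add _ _ hi, Finset.sdiff_singleton_eq_erase]
    ring
  · rw [Finset.sum_update_of_notMem (by simp [h]), if_neg h, add_zero]

lemma zmod2_1 : ∀ a b p q : ZMod 2, b*p + a*q = a*b + (a*q + b*(p+a)) := by decide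
lemma zmod2_2 : ∀ a b p q : ZMod 2, b*p + a*(q+b) = a*b + (a*q + b*p) := by decide

lemma combHom {gr : ZMod 2 → Submodule 𝔽 N} (ξ η : ZMod 2) (c : 𝔽) {P Q : N →ₗ[𝔽] N}
    (hP : Homog gr ξ P) (hQ : Homog gr η Q) :
    Homog gr (ξ + η) (P ∘ₗ Q - c • (Q ∘ₗ P)) := by
  intro g y hy
  simp only [LinearMap.sub_apply, LinearMap.smul_apply, LinearMap.comp_apply]
  refine Submodule.sub_mem _ ?_ (Submodule.smul_mem _ _ ?_)
  · have := hP _ _ (hQ g y hy)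
    rwa [show g + η + ξ = g + (ξ + η) by ring] at this
  · have := hQ _ _ (hP g y hy)
    rwa [show g + ξ + η = g + (ξ + η) by ring] at this

lemma combComm {α : N →ₗ[𝔽] N} (c : 𝔽) {P Q : N →ₗ[𝔽] N}
    (hP : P ∘ₗ α = α ∘ₗ P) (hQ : Q ∘ₗ α = α ∘ₗ Q) :
    (P ∘ₗ Q - c • (Q ∘ₗ P)) ∘ₗ α = α ∘ₗ (P ∘ₗ Q - c • (Q ∘ₗ P)) := by
  ext y
  simp only [LinearMap.sub_apply, LinearMap.smul_apply, LinearMap.comp_apply, map_sub, map_smul]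
  rw [commApply hQ y, commApply hP (Q y), commApply hP y, commApply hQ (P y)]

end AuxGDer

/-- Proposition 3.1(1) for `GDer`: the generalized derivation algebra `GDer(N)` of a
multiplicative `n`-Hom Lie superalgebra is a Hom-subalgebra of `(Ω, [·,·], α̃)`:
`α̃(D) = α ∘ D` is a generalized `α^{k+1}`-derivation of degree `ξ` and the
supercommutator `[D, E] = DE - (-1)^{ξη} ED` is a generalized `α^{k+s}`-derivation of
degree `ξ + η`. -/
theorem gder_hom_subalgebra {𝔽 : Type*} [Field 𝔽] [CharZero 𝔽]
    {N : Type*} [AddCommGroup N] [Module 𝔽 N] {m : ℕ} (hm : 1 ≤ m)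
    (gr : ZMod 2 → Submodule 𝔽 N) (br : MultilinearMap 𝔽 (fun _ : Fin (m + 1) => N) N)
    (α : N →ₗ[𝔽] N) (H : IsMNHLS gr br α)
    (k s : ℕ) (ξ η : ZMod 2) (D E : N →ₗ[𝔽] N)
    (hD : IsGDer gr br α k ξ D) (hE : IsGDer gr br α s η E) :
    IsGDer gr br α (k + 1) ξ (α ∘ₗ D) ∧
      IsGDer gr br α (k + s) (ξ + η) (D ∘ₗ E - sgn 𝔽 (ξ * η) • (E ∘ₗ D)) := by
  obtain ⟨hDhom, hDcomm, DD, Dn, hDD0, hDDhom, hDDcomm, hDnhom, hDncomm, hidD⟩ := hD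
  obtain ⟨hEhom, hEcomm, EE, En, hEE0, hEEhom, hEEcomm, hEnhom, hEncomm, hidE⟩ := hE
  constructor
  · refine ⟨?_, ?_, fun i => α ∘ₗ DD i, α ∘ₗ Dn, by simp only [hDD0], ?_, ?_, ?_, ?_, ?_⟩
    · intro g y hy
      exact H.alpha_even _ _ (hDhom g y hy)
    · rw [LinearMap.comp_assoc, hDcomm]
    · intro i g y hy
      exact H.alpha_even _ _ (hDDhom i g y hy)
    · intro i
      rw [LinearMap.comp_assoc, hDDcomm i]
    · intro g y hy
      exact H.alpha_even _ _ (hDnhom g y hy)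
    · rw [LinearMap.comp_assoc, hDncomm]
    · intro d x hx
      rw [LinearMap.comp_apply, ← hidD d x hx, map_sum]
      refine Finset.sum_congr rfl fun i _ => ?_
      rw [map_smul]
      congr 1
      rw [H.alpha_br]
      congr 1
      funext l
      rcases eq_or_ne l i with rfl | h
      · simp only [Function.update_self, LinearMap.comp_apply]
      · simp only [Function.update_of_ne h]
        exact powApply α k (x l)
  · refine ⟨?_, ?_, fun i => DD i ∘ₗ EE i - sgn 𝔽 (ξ * η) • (EE i ∘ₗ DD i),
      Dn ∘ₗ En - sgn 𝔽 (ξ * η) • (En ∘ₗ Dn), by simp only [hDD0, hEE0], ?_, ?_, ?_, ?_, ?_⟩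
    · rw [← hDD0, ← hEE0]
      exact combHom ξ η _ (hDDhom 0) (hEEhom 0)
    · rw [← hDD0, ← hEE0]
      exact combComm _ (hDDcomm 0) (hEEcomm 0)
    · intro i
      exact combHom ξ η _ (hDDhom i) (hEEhom i)
    · intro i
      exact combComm _ (hDDcomm i) (hEEcomm i)
    · exact combHom ξ η _ hDnhom hEnhom
    · exact combComm _ hDncomm hEncomm
    · intro d x hx
      have hV : ∀ i l, (Function.update (fun j' => (α^s) (x j')) i (EE i (x i))) l ∈ gr (Function.update d i (d i + η) l) := by
        intro i l
        rcases eq_or_ne l i with rfl | h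
        · simp only [Function.update_self]
          exact hEEhom l (d l) (x l) (hx l)
        · simp only [Function.update_of_ne h]
          exact gradePow H.alpha_even s (d l) (x l) (hx l)
      have hW : ∀ j l, (Function.update (fun l' => (α^k) (x l')) j (DD j (x j))) l ∈ gr (Function.update d j (d j + ξ) l) := by
        intro j l
        rcases eq_or_ne l j with rfl | h
        · simp only [Function.update_self]
          exact hDDhom l (d l) (x l) (hx l)
        · simp only [Function.update_of_ne h]
          exact gradePow H.alpha_even k (d l) (x l) (hx l)
      have h1 : Dn (En (br x)) = ∑ i : Fin (m+1), ∑ j : Fin (m+1),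
          (sgn 𝔽 (η * psum d i) * sgn 𝔽 (ξ * psum (Function.update d i (d i + η)) j)) •
            br (Function.update (fun l => (α^k) (Function.update (fun j' => (α^s) (x j')) i (EE i (x i)) l)) j (DD j (Function.update (fun j' => (α^s) (x j')) i (EE i (x i)) j))) := by
        rw [← hidE d x hx, map_sum]
        refine Finset.sum_congr rfl fun i _ => ?_
        rw [map_smul, ← hidD (Function.update d i (d i + η)) (Function.update (fun j' => (α^s) (x j')) i (EE i (x i))) (hV i),
          Finset.smul_sum]
        refine Finset.sum_congr rfl fun j _ => ?_
        rw [smul_smul]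
      have h2 : En (Dn (br x)) = ∑ j : Fin (m+1), ∑ i : Fin (m+1),
          (sgn 𝔽 (ξ * psum d j) * sgn 𝔽 (η * psum (Function.update d j (d j + ξ)) i)) •
            br (Function.update (fun l => (α^s) (Function.update (fun l' => (α^k) (x l')) j (DD j (x j)) l)) i (EE i (Function.update (fun l' => (α^k) (x l')) j (DD j (x j)) i))) := by
        rw [← hidD d x hx, map_sum]
        refine Finset.sum_congr rfl fun j _ => ?_
        rw [map_smul, ← hidE (Function.update d j (d j + ξ)) (Function.update (fun l' => (α^k) (x l')) j (DD j (x j))) (hW j),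
          Finset.smul_sum]
        refine Finset.sum_congr rfl fun i _ => ?_
        rw [smul_smul]
      have h2' := h2.trans Finset.sum_comm
      rw [LinearMap.sub_apply, LinearMap.smul_apply, LinearMap.comp_apply,
        LinearMap.comp_apply, h1, h2', Finset.smul_sum, ← Finset.sum_sub_distrib]
      refine Finset.sum_congr rfl fun i _ => ?_
      rw [Finset.smul_sum, ← Finset.sum_sub_distrib]
      refine Eq.symm ((Finset.sum_eq_single i (fun j _ hj => ?_)
        (fun hni => absurd (Finset.mem_univ i) hni)).trans ?_)
      · -- off-diagonal terms cancel
        have e1 : (Function.update (fun l => (α^k) (Function.update (fun j' => (α^s) (x j')) i (EE i (x i)) l)) j (DD j (Function.update (fun j' => (α^s) (x j')) i (EE i (x i)) j))) = Function.update (Function.update (fun l => (α^(k+s)) (x l)) i ((α^k) (EE i (x i)))) j ((α^s) (DD j (x j))) := by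
          funext l
          rcases eq_or_ne l j with rfl | hlj
          · simp only [Function.update_self, Function.update_of_ne hj]
            exact commPow (hDDcomm l) s (x l)
          · rcases eq_or_ne l i with rfl | hli
            · simp only [Function.update_self, Function.update_of_ne hlj]
            · simp only [Function.update_of_ne hli, Function.update_of_ne hlj]
              exact (powAdd α k s (x l)).symm
        have e2 : (Function.update (fun l => (α^s) (Function.update (fun l' => (α^k) (x l')) j (DD j (x j)) l)) i (EE i (Function.update (fun l' => (α^k) (x l')) j (DD j (x j)) i))) = Function.update (Function.update (fun l => (α^(k+s)) (x l)) i ((α^k) (EE i (x i)))) j ((α^s) (DD j (x j))) := by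
          funext l
          rcases eq_or_ne l j with rfl | hlj
          · simp only [Function.update_self, Function.update_of_ne hj]
          · rcases eq_or_ne l i with rfl | hli
            · simp only [Function.update_self, Function.update_of_ne hlj]
              exact commPow (hEEcomm l) k (x l)
            · simp only [Function.update_of_ne hli, Function.update_of_ne hlj]
              rw [← powAdd α s k (x l), Nat.add_comm s k]
        have hs : sgn 𝔽 (η * psum d i) * sgn 𝔽 (ξ * psum (Function.update d i (d i + η)) j)
            = sgn 𝔽 (ξ * η) * (sgn 𝔽 (ξ * psum d j) *
              sgn 𝔽 (η * psum (Function.update d j (d j + ξ)) i)) := by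
          rw [psum_update, psum_update]
          rcases hj.lt_or_gt with hlt | hlt
          · rw [if_neg (lt_asymm hlt), add_zero, if_pos hlt, sgn_mul', sgn_mul', sgn_mul']
            exact congrArg (sgn 𝔽) (zmod2_1 ξ η (psum d i) (psum d j))
          · rw [if_pos hlt, if_neg (lt_asymm hlt), add_zero, sgn_mul', sgn_mul', sgn_mul']
            exact congrArg (sgn 𝔽) (zmod2_2 ξ η (psum d i) (psum d j))
        rw [e1, e2, hs, smul_smul, sub_self]
      · -- diagonal term
        have e1 : (Function.update (fun l => (α^k) (Function.update (fun j' => (α^s) (x j')) i (EE i (x i)) l)) i (DD i (Function.update (fun j' => (α^s) (x j')) i (EE i (x i)) i))) = Function.update (fun l => (α^(k+s)) (x l)) i (DD i (EE i (x i))) := by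
          funext l
          rcases eq_or_ne l i with rfl | hli
          · simp only [Function.update_self]
          · simp only [Function.update_of_ne hli]
            exact (powAdd α k s (x l)).symm
        have e2 : (Function.update (fun l => (α^s) (Function.update (fun l' => (α^k) (x l')) i (DD i (x i)) l)) i (EE i (Function.update (fun l' => (α^k) (x l')) i (DD i (x i)) i))) = Function.update (fun l => (α^(k+s)) (x l)) i (EE i (DD i (x i))) := by
          funext l
          rcases eq_or_ne l i with rfl | hli
          · simp only [Function.update_self]
          · simp only [Function.update_of_ne hli]
            rw [← powAdd α s k (x l), Nat.add_comm s k]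
        rw [e1, e2, LinearMap.sub_apply, LinearMap.smul_apply, LinearMap.comp_apply,
          LinearMap.comp_apply, MultilinearMap.map_update_sub, MultilinearMap.map_update_smul,
          smul_sub, smul_smul, smul_smul, psum_update, if_neg (lt_irrefl i), add_zero,
          psum_update, if_neg (lt_irrefl i), add_zero]
        congr 1
        · congr 1
          rw [sgn_mul']
          exact congrArg (sgn 𝔽) (by ring)
        · congr 1
          rw [sgn_mul', sgn_mul', sgn_mul']
          exact congrArg (sgn 𝔽) (by ring)
end
end

section
/- The centroid C(N) of a multiplicative n-Hom Lie superalgebra N is a Hom-subalgebra of (Ω, [·,·], α̃): if D is a homogeneous α^k-centroid element of degree ξ and E a homogeneous α^s-centroid element of degree η, then α̃(D) = αD is an α^{k+1}-centroid element of degree ξ and [D,E] = DE − (−1)^{ξη}ED is an α^{k+s}-centroid element of degree ξ+η. -/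
open scoped BigOperators

noncomputable section

variable {𝔽 : Type*} [Field 𝔽]
variable {N : Type*} [AddCommGroup N] [Module 𝔽 N]

private lemma sgn_sq (g : ZMod 2) : sgn 𝔽 g * sgn 𝔽 g = 1 := by
  have h : ∀ g : ZMod 2, g = 0 ∨ g = 1 := by decide
  rcases h g with h | h <;> subst h <;> simp [sgn]

private lemma sgn_add' (a b : ZMod 2) : sgn 𝔽 (a + b) = sgn 𝔽 a * sgn 𝔽 b := by
  have h : ∀ g : ZMod 2, g = 0 ∨ g = 1 := by decide
  rcases h a with ha | ha <;> rcases h b with hb | hb <;> subst ha <;> subst hb <;>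
    simp [sgn, show (1 + 1 : ZMod 2) = 0 from rfl]

private lemma pow_mem_gr {gr : ZMod 2 → Submodule 𝔽 N} {α : N →ₗ[𝔽] N}
    (hα : ∀ g : ZMod 2, ∀ x ∈ gr g, α x ∈ gr g) (t : ℕ) (g : ZMod 2) {x : N}
    (hx : x ∈ gr g) : (α ^ t) x ∈ gr g := by
  induction t with
  | zero => simpa using hx
  | succ n ih =>
    rw [pow_succ', Module.End.mul_apply]
    exact hα g _ ih

private lemma psum_update_self {m : ℕ} (d : Fin m → ZMod 2) (i : Fin m) (c : ZMod 2) :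
    psum (Function.update d i c) i = psum d i := by
  unfold psum
  refine Finset.sum_congr rfl fun j hj => ?_
  simp only [Finset.mem_filter] at hj
  exact Function.update_of_ne (ne_of_lt hj.2) _ _

private lemma isCent_comp {m : ℕ} {gr : ZMod 2 → Submodule 𝔽 N}
    {br : MultilinearMap 𝔽 (fun _ : Fin (m + 1) => N) N} {α : N →ₗ[𝔽] N}
    (hα : ∀ g : ZMod 2, ∀ x ∈ gr g, α x ∈ gr g)
    {k s : ℕ} {ξ η : ZMod 2} {D E : N →ₗ[𝔽] N}
    (hD : IsCent gr br α k ξ D) (hE : IsCent gr br α s η E) :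
    IsCent gr br α (k + s) (ξ + η) (D ∘ₗ E) := by
  obtain ⟨hDh, hDα, hDc⟩ := hD
  obtain ⟨hEh, hEα, hEc⟩ := hE
  have hDα' : ∀ v, D (α v) = α (D v) := fun v => LinearMap.congr_fun hDα v
  have hEα' : ∀ v, E (α v) = α (E v) := fun v => LinearMap.congr_fun hEα v
  refine ⟨?_, ?_, ?_⟩
  · intro g x hx
    have h := hDh (g + η) _ (hEh g x hx)
    rw [show g + η + ξ = g + (ξ + η) by ring] at h
    exact h
  · ext v
    simp only [LinearMap.comp_apply, hDα', hEα']
  · intro d x hx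
    set F : Fin (m + 1) → N := fun j => (α ^ (k + s)) (x j) with hF
    set z : Fin (m + 1) → N :=
      Function.update (fun j => (α ^ s) (x j)) 0 (E (x 0)) with hzdef
    set dz : Fin (m + 1) → ZMod 2 := Function.update d 0 (d 0 + η) with hdzdef
    have hz : ∀ j, z j ∈ gr (dz j) := by
      intro j
      rcases eq_or_ne j 0 with h | h
      · subst h
        rw [hzdef, hdzdef, Function.update_self, Function.update_self]
        exact hEh _ _ (hx 0)
      · rw [hzdef, hdzdef, Function.update_of_ne h, Function.update_of_ne h]
        exact pow_mem_gr hα s _ (hx j)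
    have hz0 : z 0 = E (x 0) := by rw [hzdef, Function.update_self]
    have S2 : (fun j => (α ^ k) (z j)) = Function.update F 0 ((α ^ k) (E (x 0))) := by
      funext j
      rcases eq_or_ne j 0 with h | h
      · subst h; simp [hzdef, hF]
      · simp only [hzdef, hF, Function.update_of_ne h]
        rw [← Module.End.mul_apply, ← pow_add]
    have hz2 := (hDc dz z hz).2
    rw [S2, hz0, Function.update_idem] at hz2
    have hEx2 := (hEc d x hx).2
    rw [← hzdef] at hEx2
    -- hz2 : br (update F 0 (D (E (x 0)))) = D (br z)
    -- hEx2 : br z = E (br x)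
    have cond2 : br (Function.update F 0 ((D ∘ₗ E) (x 0))) = (D ∘ₗ E) (br x) := by
      simp only [LinearMap.comp_apply]
      rw [hz2, hEx2]
    refine ⟨fun i => ?_, cond2⟩
    set y : Fin (m + 1) → N :=
      Function.update (fun j => (α ^ s) (x j)) i (E (x i)) with hydef
    set dy : Fin (m + 1) → ZMod 2 := Function.update d i (d i + η) with hdydef
    have hy : ∀ j, y j ∈ gr (dy j) := by
      intro j
      rcases eq_or_ne j i with h | h
      · subst h
        rw [hydef, hdydef, Function.update_self, Function.update_self]
        exact hEh _ _ (hx j)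
      · rw [hydef, hdydef, Function.update_of_ne h, Function.update_of_ne h]
        exact pow_mem_gr hα s _ (hx j)
    have hyi : y i = E (x i) := by rw [hydef, Function.update_self]
    have S1 : (fun j => (α ^ k) (y j)) = Function.update F i ((α ^ k) (E (x i))) := by
      funext j
      rcases eq_or_ne j i with h | h
      · subst h; simp [hydef, hF]
      · simp only [hydef, hF, Function.update_of_ne h]
        rw [← Module.End.mul_apply, ← pow_add]
    have hDy2 := (hDc dy y hy).2
    have hDy1 := (hDc dy y hy).1 i
    have hEx1 := (hEc d x hx).1 i
    rw [← hydef, hEx2] at hEx1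
    -- hEx1 : E (br x) = sgn (η * psum d i) • br y
    have hbry : br y = sgn 𝔽 (η * psum d i) • E (br x) := by
      rw [hEx1, smul_smul, sgn_sq, one_smul]
    simp only [LinearMap.comp_apply]
    calc br (Function.update F 0 (D (E (x 0))))
        = D (E (br x)) := by rw [hz2, hEx2]
      _ = sgn 𝔽 (η * psum d i) • D (br y) := by
          rw [hbry, map_smul, smul_smul, sgn_sq, one_smul]
      _ = sgn 𝔽 (η * psum d i) •
            br (Function.update (fun j => (α ^ k) (y j)) 0 (D (y 0))) := by
          rw [hDy2]
      _ = sgn 𝔽 (η * psum d i) • sgn 𝔽 (ξ * psum dy i) •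
            br (Function.update (fun j => (α ^ k) (y j)) i (D (y i))) := by
          rw [hDy1]
      _ = sgn 𝔽 ((ξ + η) * psum d i) •
            br (Function.update F i (D (E (x i)))) := by
          rw [S1, Function.update_idem, hyi, hdydef, psum_update_self, smul_smul,
            ← sgn_add', show η * psum d i + ξ * psum d i = (ξ + η) * psum d i by ring]

private lemma isCent_sub_smul {m : ℕ} {gr : ZMod 2 → Submodule 𝔽 N}
    {br : MultilinearMap 𝔽 (fun _ : Fin (m + 1) => N) N} {α : N →ₗ[𝔽] N}
    {k : ℕ} {ξ : ZMod 2} (c : 𝔽) {A B : N →ₗ[𝔽] N}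
    (hA : IsCent gr br α k ξ A) (hB : IsCent gr br α k ξ B) :
    IsCent gr br α k ξ (A - c • B) := by
  obtain ⟨hAh, hAα, hAc⟩ := hA
  obtain ⟨hBh, hBα, hBc⟩ := hB
  refine ⟨?_, ?_, ?_⟩
  · intro g x hx
    simp only [LinearMap.sub_apply, LinearMap.smul_apply]
    exact sub_mem (hAh g x hx) (Submodule.smul_mem _ c (hBh g x hx))
  · rw [LinearMap.sub_comp, LinearMap.comp_sub, LinearMap.smul_comp,
      LinearMap.comp_smul, hAα, hBα]
  · intro d x hx
    have hA' := hAc d x hx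
    have hB' := hBc d x hx
    constructor
    · intro i
      simp only [LinearMap.sub_apply, LinearMap.smul_apply]
      rw [MultilinearMap.map_update_sub, MultilinearMap.map_update_smul,
        MultilinearMap.map_update_sub, MultilinearMap.map_update_smul,
        hA'.1 i, hB'.1 i]
      module
    · simp only [LinearMap.sub_apply, LinearMap.smul_apply]
      rw [MultilinearMap.map_update_sub, MultilinearMap.map_update_smul,
        hA'.2, hB'.2]
/-- Proposition 3.1(1) for `C`: the centroid `C(N)` of a multiplicative `n`-Hom Lie
superalgebra is a Hom-subalgebra of `(Ω, [·,·], α̃)`. -/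
theorem cent_hom_subalgebra {𝔽 : Type*} [Field 𝔽] [CharZero 𝔽]
    {N : Type*} [AddCommGroup N] [Module 𝔽 N] {m : ℕ} (hm : 1 ≤ m)
    (gr : ZMod 2 → Submodule 𝔽 N) (br : MultilinearMap 𝔽 (fun _ : Fin (m + 1) => N) N)
    (α : N →ₗ[𝔽] N) (H : IsMNHLS gr br α)
    (k s : ℕ) (ξ η : ZMod 2) (D E : N →ₗ[𝔽] N)
    (hD : IsCent gr br α k ξ D) (hE : IsCent gr br α s η E) :
    IsCent gr br α (k + 1) ξ (α ∘ₗ D) ∧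
      IsCent gr br α (k + s) (ξ + η) (D ∘ₗ E - sgn 𝔽 (ξ * η) • (E ∘ₗ D)) := by
  constructor
  · refine ⟨?_, ?_, ?_⟩
    · intro g x hx
      exact H.alpha_even _ _ (hD.1 g x hx)
    · rw [LinearMap.comp_assoc, hD.2.1]
    · intro d x hx
      have key : ∀ (i : Fin (m + 1)) (v : N),
          Function.update (fun j => (α ^ (k + 1)) (x j)) i (α v) =
            fun j => α (Function.update (fun j => (α ^ k) (x j)) i v j) := by
        intro i v
        funext j
        rcases eq_or_ne j i with h | h
        · subst h; simp
        · rw [Function.update_of_ne h, Function.update_of_ne h,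
            ← Module.End.mul_apply, ← pow_succ']
      have hbr : ∀ (i : Fin (m + 1)) (v : N),
          br (Function.update (fun j => (α ^ (k + 1)) (x j)) i (α v)) =
            α (br (Function.update (fun j => (α ^ k) (x j)) i v)) := by
        intro i v
        rw [key, ← H.alpha_br]
      have hDc' := hD.2.2 d x hx
      constructor
      · intro i
        simp only [LinearMap.comp_apply]
        rw [hbr 0 (D (x 0)), hbr i (D (x i)), hDc'.1 i, map_smul]
      · simp only [LinearMap.comp_apply]
        rw [hbr 0 (D (x 0)), hDc'.2]
  · have h1 : IsCent gr br α (k + s) (ξ + η) (D ∘ₗ E) :=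
      isCent_comp H.alpha_even hD hE
    have h2 : IsCent gr br α (k + s) (ξ + η) (E ∘ₗ D) := by
      have h := isCent_comp H.alpha_even hE hD
      rwa [add_comm s k, add_comm η ξ] at h
    exact isCent_sub_smul _ h1 h2
end
end

section
/- The center derivation algebra ZDer(N) of a multiplicative n-Hom Lie superalgebra N is a Hom-ideal of the derivation algebra Der(N): if D is a homogeneous α^k-center derivation of degree ξ and E a homogeneous α^s-derivation of degree η, then α̃(D) = αD is an α^{k+1}-center derivation of degree ξ and [D,E] = DE − (−1)^{ξη}ED is an α^{k+s}-center derivation of degree ξ+η. -/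
open scoped BigOperators

noncomputable section

variable {𝔽 : Type*} [Field 𝔽]
variable {N : Type*} [AddCommGroup N] [Module 𝔽 N]

lemma aux_pow_mem {gr : ZMod 2 → Submodule 𝔽 N} {α : N →ₗ[𝔽] N}
    (h : ∀ g : ZMod 2, ∀ x ∈ gr g, α x ∈ gr g) (n : ℕ) (g : ZMod 2) (x : N)
    (hx : x ∈ gr g) : (α ^ n) x ∈ gr g := by
  induction n generalizing x with
  | zero => simpa using hx
  | succ n ih =>
    rw [pow_succ, Module.End.mul_apply]
    exact ih _ (h g x hx)

lemma aux_comm_pow {α D : N →ₗ[𝔽] N} (h : D ∘ₗ α = α ∘ₗ D) (n : ℕ) (x : N) :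
    D ((α ^ n) x) = (α ^ n) (D x) := by
  induction n generalizing x with
  | zero => simp
  | succ n ih =>
    have hx : D (α x) = α (D x) := LinearMap.congr_fun h x
    rw [pow_succ, Module.End.mul_apply, Module.End.mul_apply, ih (α x), hx]

lemma aux_psum_zero {m : ℕ} (d : Fin (m + 1) → ZMod 2) : psum d 0 = 0 := by
  unfold psum
  rw [Finset.sum_eq_zero]
  intro j hj
  simp only [Finset.mem_filter] at hj
  exact absurd hj.2 (Fin.not_lt_zero j)

lemma aux_sgn_zero : sgn 𝔽 0 = 1 := by simp [sgn]

lemma aux_pow_comm (α : N →ₗ[𝔽] N) (a b : ℕ) (v : N) :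
    (α ^ a) ((α ^ b) v) = (α ^ b) ((α ^ a) v) := by
  rw [← Module.End.mul_apply, ← Module.End.mul_apply, ← pow_add, ← pow_add, add_comm]

/-- Proposition 3.1(2): the center derivation algebra `ZDer(N)` is a Hom-ideal of the
derivation algebra `Der(N)`: `α̃(D) = α ∘ D` is an `α^{k+1}`-center derivation of degree
`ξ`, and for any `α^s`-derivation `E` of degree `η`, the supercommutator
`[D, E] = DE - (-1)^{ξη} ED` is an `α^{k+s}`-center derivation of degree `ξ + η`. -/
theorem zder_hom_ideal {𝔽 : Type*} [Field 𝔽] [CharZero 𝔽]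
    {N : Type*} [AddCommGroup N] [Module 𝔽 N] {m : ℕ} (hm : 1 ≤ m)
    (gr : ZMod 2 → Submodule 𝔽 N) (br : MultilinearMap 𝔽 (fun _ : Fin (m + 1) => N) N)
    (α : N →ₗ[𝔽] N) (H : IsMNHLS gr br α)
    (k s : ℕ) (ξ η : ZMod 2) (D E : N →ₗ[𝔽] N)
    (hD : IsZDer gr br α k ξ D) (hE : IsDer gr br α s η E) :
    IsZDer gr br α (k + 1) ξ (α ∘ₗ D) ∧
      IsZDer gr br α (k + s) (ξ + η) (D ∘ₗ E - sgn 𝔽 (ξ * η) • (E ∘ₗ D)) := by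
  obtain ⟨hDh, hDα, hDbr⟩ := hD
  obtain ⟨hEh, hEα, hEbr⟩ := hE
  have hDαp : ∀ x, D (α x) = α (D x) := fun x => LinearMap.congr_fun hDα x
  have hEαp : ∀ x, E (α x) = α (E x) := fun x => LinearMap.congr_fun hEα x
  constructor
  · refine ⟨?_, ?_, ?_⟩
    · intro g x hx
      exact H.alpha_even _ _ (hDh g x hx)
    · ext x
      simp only [LinearMap.comp_apply]
      rw [hDαp x]
    · intro d x hx
      have h0 := hDbr d x hx
      constructor
      · have hfun : Function.update (fun j => (α ^ (k + 1)) (x j)) 0 ((α ∘ₗ D) (x 0))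
            = fun j => α ((Function.update (fun j => (α ^ k) (x j)) 0 (D (x 0))) j) := by
          funext j
          by_cases hj : j = 0
          · subst hj; simp
          · rw [Function.update_of_ne hj, Function.update_of_ne hj, pow_succ',
              Module.End.mul_apply]
        rw [hfun, ← H.alpha_br, h0.1, map_zero]
      · simp only [LinearMap.comp_apply]
        rw [h0.2, map_zero]
  · refine ⟨?_, ?_, ?_⟩
    · intro g x hx
      have h1 : D (E x) ∈ gr (g + (ξ + η)) := by
        rw [show g + (ξ + η) = g + η + ξ by ring]
        exact hDh (g + η) (E x) (hEh g x hx)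
      have h2 : E (D x) ∈ gr (g + (ξ + η)) := by
        rw [show g + (ξ + η) = g + ξ + η by ring]
        exact hEh (g + ξ) (D x) (hDh g x hx)
      have hexp : (D ∘ₗ E - sgn 𝔽 (ξ * η) • (E ∘ₗ D)) x
          = D (E x) - sgn 𝔽 (ξ * η) • E (D x) := by simp
      rw [hexp]
      exact sub_mem h1 (Submodule.smul_mem _ _ h2)
    · ext x
      simp only [LinearMap.comp_apply, LinearMap.sub_apply, LinearMap.smul_apply,
        map_sub, map_smul]
      rw [hEαp x, hDαp (E x), hDαp x, hEαp (D x)]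
    · intro d x hx
      -- homogeneity of the families `update (α^s x) i (E (x i))`
      have hyE : ∀ i : Fin (m + 1), ∀ j,
          (Function.update (fun j => (α ^ s) (x j)) i (E (x i))) j
            ∈ gr ((Function.update d i (d i + η)) j) := by
        intro i j
        by_cases hj : j = i
        · subst hj; simpa using hEh _ _ (hx j)
        · rw [Function.update_of_ne hj, Function.update_of_ne hj]
          exact aux_pow_mem H.alpha_even s _ _ (hx j)
      have hDyE : ∀ i : Fin (m + 1),
          D (br (Function.update (fun j => (α ^ s) (x j)) i (E (x i)))) = 0 :=
        fun i => (hDbr _ _ (hyE i)).2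
      -- part (b): `[D,E] (br x) = 0`
      have hb : D (E (br x)) = 0 := by
        rw [hEbr d x hx, map_sum]
        apply Finset.sum_eq_zero
        intro i _
        rw [map_smul, hDyE i, smul_zero]
      have hb2 : E (D (br x)) = 0 := by rw [(hDbr d x hx).2, map_zero]
      -- part (a), first piece
      have ha1 : br (Function.update (fun j => (α ^ (k + s)) (x j)) 0 (D (E (x 0)))) = 0 := by
        have h := (hDbr (Function.update d 0 (d 0 + η))
          (Function.update (fun j => (α ^ s) (x j)) 0 (E (x 0))) (hyE 0)).1
        have hfun : Function.update (fun j => (α ^ (k + s)) (x j)) 0 (D (E (x 0)))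
            = Function.update
                (fun j => (α ^ k) ((Function.update (fun j => (α ^ s) (x j)) 0 (E (x 0))) j)) 0
                (D ((Function.update (fun j => (α ^ s) (x j)) 0 (E (x 0))) 0)) := by
          funext j
          by_cases hj : j = 0
          · subst hj; simp
          · rw [Function.update_of_ne hj, Function.update_of_ne hj, Function.update_of_ne hj,
              pow_add, Module.End.mul_apply]
        rw [hfun]; exact h
      -- part (a), second piece
      have ha2 : br (Function.update (fun j => (α ^ (k + s)) (x j)) 0 (E (D (x 0)))) = 0 := by
        have hx'' : ∀ j, (Function.update (fun j => (α ^ k) (x j)) 0 (D (x 0))) j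
            ∈ gr ((Function.update d 0 (d 0 + ξ)) j) := by
          intro j
          by_cases hj : j = 0
          · subst hj; simpa using hDh _ _ (hx 0)
          · rw [Function.update_of_ne hj, Function.update_of_ne hj]
            exact aux_pow_mem H.alpha_even k _ _ (hx j)
        have h1 := hEbr (Function.update d 0 (d 0 + ξ))
          (Function.update (fun j => (α ^ k) (x j)) 0 (D (x 0))) hx''
        rw [(hDbr d x hx).1, map_zero] at h1
        have hterm : ∀ i : Fin (m + 1), i ≠ 0 →
            br (Function.update
              (fun j => (α ^ s) ((Function.update (fun j => (α ^ k) (x j)) 0 (D (x 0))) j)) i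
              (E ((Function.update (fun j => (α ^ k) (x j)) 0 (D (x 0))) i))) = 0 := by
          intro i hi
          have h2 := (hDbr (Function.update d i (d i + η))
            (Function.update (fun j => (α ^ s) (x j)) i (E (x i))) (hyE i)).1
          have hfun : (Function.update
              (fun j => (α ^ s) ((Function.update (fun j => (α ^ k) (x j)) 0 (D (x 0))) j)) i
              (E ((Function.update (fun j => (α ^ k) (x j)) 0 (D (x 0))) i)))
              = Function.update
                (fun j => (α ^ k) ((Function.update (fun j => (α ^ s) (x j)) i (E (x i))) j)) 0
                (D ((Function.update (fun j => (α ^ s) (x j)) i (E (x i))) 0)) := by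
            funext j
            by_cases hj0 : j = 0
            · subst hj0
              rw [Function.update_of_ne (Ne.symm hi), Function.update_self,
                Function.update_self, Function.update_of_ne (Ne.symm hi)]
              exact (aux_comm_pow hDα s (x 0)).symm
            · by_cases hji : j = i
              · subst hji
                rw [Function.update_self, Function.update_of_ne hj0,
                  Function.update_of_ne hj0, Function.update_self]
                exact aux_comm_pow hEα k (x j)
              · rw [Function.update_of_ne hji, Function.update_of_ne hj0,
                  Function.update_of_ne hj0, Function.update_of_ne hji]
                exact aux_pow_comm α s k (x j)
          rw [hfun]; exact h2
        have h3 : (0 : N) = sgn 𝔽 (η * psum (Function.update d 0 (d 0 + ξ)) 0) •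
            br (Function.update
              (fun j => (α ^ s) ((Function.update (fun j => (α ^ k) (x j)) 0 (D (x 0))) j)) 0
              (E ((Function.update (fun j => (α ^ k) (x j)) 0 (D (x 0))) 0))) := by
          rw [h1]
          exact Fintype.sum_eq_single 0 (fun i hi => by rw [hterm i hi, smul_zero])
        rw [aux_psum_zero, mul_zero, aux_sgn_zero, one_smul] at h3
        have hfun2 : Function.update (fun j => (α ^ (k + s)) (x j)) 0 (E (D (x 0)))
            = Function.update
              (fun j => (α ^ s) ((Function.update (fun j => (α ^ k) (x j)) 0 (D (x 0))) j)) 0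
              (E ((Function.update (fun j => (α ^ k) (x j)) 0 (D (x 0))) 0)) := by
          funext j
          by_cases hj : j = 0
          · subst hj; simp
          · rw [Function.update_of_ne hj, Function.update_of_ne hj, Function.update_of_ne hj,
              ← Module.End.mul_apply, ← pow_add, add_comm k s]
        rw [hfun2, ← h3]
      constructor
      · have hexp : (D ∘ₗ E - sgn 𝔽 (ξ * η) • (E ∘ₗ D)) (x 0)
            = D (E (x 0)) - sgn 𝔽 (ξ * η) • E (D (x 0)) := by simp
        rw [hexp, MultilinearMap.map_update_sub, MultilinearMap.map_update_smul, ha1, ha2, smul_zero,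
          sub_zero]
      · simp only [LinearMap.sub_apply, LinearMap.smul_apply, LinearMap.comp_apply]
        rw [hb, hb2, smul_zero, sub_zero]
end
end
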